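/- arXiv:1409.2249 — 7 statements merged into one kernel-verified Lean document; each statement's English description precedes it below -/
import Mathlib

section
/- If Q is a connected rack, then the derived (commutator) subgroup of RMlt(Q) equals Dis(Q). -/
/-!
Every element of `RMlt(Q)` is an automorphism of the rack, so conjugation by it permutes the
right translations, `g R_a g⁻¹ = R_{g a}`; hence `Dis(Q)` is normal in `RMlt(Q)`. For `g ∈ RMlt(Q)`
the commutator `[g, R_x] = R_{g x} R_x⁻¹` is a displacement, and normality propagates this from
the generators `R_x` to all of `RMlt(Q)`, giving `RMlt(Q)' ≤ Dis(Q)`. Conversely, if `g ∈ RMlt(Q)`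
maps `u` to `v` (connectedness), then `R_u⁻¹ R_v = [R_u⁻¹, g]`.
-/

variable {Q : Type*}

/-- The right multiplication group of a rack: generated by all right translations. -/
def RMlt (R : Q → Equiv.Perm Q) : Subgroup (Equiv.Perm Q) :=
  Subgroup.closure (Set.range R)

/-- The group of displacements of a rack: generated by all `(R a)⁻¹ * R b`. -/
def Dis (R : Q → Equiv.Perm Q) : Subgroup (Equiv.Perm Q) :=
  Subgroup.closure {f : Equiv.Perm Q | ∃ a b : Q, f = (R a)⁻¹ * R b}

open scoped commutatorElement

def opAut (op : Q → Q → Q) : Subgroup (Equiv.Perm Q) where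
  carrier := {g | ∀ u v, g (op u v) = op (g u) (g v)}
  mul_mem' {g h} hg hh u v := by rw [Equiv.Perm.mul_apply, hh, hg]; rfl
  one_mem' _ _ := rfl
  inv_mem' {g} hg u v := g.injective <| by
    simp only [hg _ _, Equiv.Perm.coe_inv, Equiv.apply_symm_apply]

section Rack

variable {op : Q → Q → Q} {R : Q → Equiv.Perm Q}

theorem rmlt_le_opAut (hrack : ∀ x a b, R x (op a b) = op (R x a) (R x b)) :
    RMlt R ≤ opAut op :=
  (Subgroup.closure_le _).2 <| by
    rintro _ ⟨x, rfl⟩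
    exact hrack x

theorem dis_le_rmlt : Dis R ≤ RMlt R :=
  (Subgroup.closure_le _).2 <| by
    rintro _ ⟨a, b, rfl⟩
    exact mul_mem (inv_mem (Subgroup.subset_closure ⟨a, rfl⟩)) (Subgroup.subset_closure ⟨b, rfl⟩)

theorem conj_R_eq (hR : ∀ x y, R x y = op y x) {g : Equiv.Perm Q} (hg : g ∈ opAut op) (a : Q) :
    g * R a * g⁻¹ = R (g a) := by
  ext y
  simp only [Equiv.Perm.mul_apply, hR, hg _ _, Equiv.Perm.coe_inv, Equiv.apply_symm_apply]

theorem conj_mem_dis (hR : ∀ x y, R x y = op y x) {g : Equiv.Perm Q} (hg : g ∈ opAut op)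
    {d : Equiv.Perm Q} (hd : d ∈ Dis R) : g * d * g⁻¹ ∈ Dis R := by
  suffices Dis R ≤ (Dis R).comap (MulAut.conj g).toMonoidHom from this hd
  refine (Subgroup.closure_le _).2 ?_
  rintro _ ⟨a, b, rfl⟩
  have hconj : g * ((R a)⁻¹ * R b) * g⁻¹ = (g * R a * g⁻¹)⁻¹ * (g * R b * g⁻¹) := by group
  simp only [SetLike.mem_coe, Subgroup.mem_comap, MulEquiv.coe_toMonoidHom, MulAut.conj_apply,
    hconj, conj_R_eq hR hg]
  exact Subgroup.subset_closure ⟨g a, g b, rfl⟩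

theorem mul_inv_mem_dis (hR : ∀ x y, R x y = op y x)
    (hrack : ∀ x a b, R x (op a b) = op (R x a) (R x b)) (a b : Q) : R a * (R b)⁻¹ ∈ Dis R := by
  have hconj : R a * (R b)⁻¹ = R a * ((R b)⁻¹ * R a) * (R a)⁻¹ := by group
  rw [hconj]
  exact conj_mem_dis hR (rmlt_le_opAut hrack (Subgroup.subset_closure ⟨a, rfl⟩))
    (Subgroup.subset_closure ⟨b, a, rfl⟩)

theorem commutator_rmlt_le_dis (hR : ∀ x y, R x y = op y x)
    (hrack : ∀ x a b, R x (op a b) = op (R x a) (R x b)) : ⁅RMlt R, RMlt R⁆ ≤ Dis R := by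
  rw [Subgroup.commutator_le]
  intro g hg h hh
  have hAut := rmlt_le_opAut hrack
  induction hh using Subgroup.closure_induction with
  | mem _ hx =>
    obtain ⟨x, rfl⟩ := hx
    rw [commutatorElement_def, conj_R_eq hR (hAut hg)]
    exact mul_inv_mem_dis hR hrack _ _
  | one => simp only [commutatorElement_one_right, one_mem]
  | mul h₁ h₂ hh₁ _ ih₁ ih₂ =>
    have hsplit : ⁅g, h₁ * h₂⁆ = ⁅g, h₁⁆ * (h₁ * ⁅g, h₂⁆ * h₁⁻¹) := by
      simp only [commutatorElement_def]; group
    rw [hsplit]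
    exact mul_mem ih₁ (conj_mem_dis hR (hAut hh₁) ih₂)
  | inv h hh ih =>
    have hinv : ⁅g, h⁻¹⁆ = h⁻¹ * ⁅g, h⁆⁻¹ * h⁻¹⁻¹ := by
      simp only [commutatorElement_def]; group
    rw [hinv]
    exact conj_mem_dis hR (inv_mem (hAut hh)) (inv_mem ih)

theorem dis_le_commutator_rmlt (hR : ∀ x y, R x y = op y x)
    (hrack : ∀ x a b, R x (op a b) = op (R x a) (R x b))
    (hconn : ∀ x y : Q, ∃ g ∈ RMlt R, g x = y) : Dis R ≤ ⁅RMlt R, RMlt R⁆ := by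
  refine (Subgroup.closure_le _).2 ?_
  rintro _ ⟨u, v, rfl⟩
  obtain ⟨g, hg, rfl⟩ := hconn u v
  have hcomm : (R u)⁻¹ * R (g u) = ⁅(R u)⁻¹, g⁆ := by
    rw [commutatorElement_def, ← conj_R_eq hR (rmlt_le_opAut hrack hg)]
    group
  rw [SetLike.mem_coe, hcomm]
  exact Subgroup.commutator_mem_commutator (inv_mem (Subgroup.subset_closure ⟨u, rfl⟩)) hg

end Rack

/-- If `Q` is a connected rack, then `RMlt(Q)' = Dis(Q)`. -/
theorem stmt4 (op : Q → Q → Q) (R : Q → Equiv.Perm Q)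
    (hR : ∀ x y, R x y = op y x)
    (hrack : ∀ x a b, R x (op a b) = op (R x a) (R x b))
    (hconn : ∀ x y : Q, ∃ g ∈ RMlt R, g x = y) :
    ⁅RMlt R, RMlt R⁆ = Dis R :=
  le_antisymm (commutator_rmlt_le_dis hR hrack) (dis_le_commutator_rmlt hR hrack hconn)
end

section
/- For a rack Q, the group Dis(Q) is abelian if and only if Q is medial, i.e., satisfies (x·y)·(u·v) = (x·u)·(y·v) for all x, y, u, v. -/
/-!
The rack axiom says that `R` is conjugation-equivariant, `R (u·v) = R v * R u * (R v)⁻¹`.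
Hence `(x·y)·(u·v) = (R v)² ((R v)⁻¹ R u) ((R v)⁻¹ R y) x`, so mediality says exactly that any two
displacements `(R v)⁻¹ R u` and `(R v)⁻¹ R y` with a common base `v` commute. Since
`(R c)⁻¹ R d = ((R a)⁻¹ R c)⁻¹ ((R a)⁻¹ R d)`, this makes all generators of `Dis Q` commute.
-/

variable {Q : Type*}

theorem commute_inv_mul_inv_mul {G ι : Type*} [Group G] {f : ι → G}
    (h : ∀ a b c, Commute ((f a)⁻¹ * f b) ((f a)⁻¹ * f c)) (a b c d : ι) :
    Commute ((f a)⁻¹ * f b) ((f c)⁻¹ * f d) := by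
  have hcd : (f c)⁻¹ * f d = ((f a)⁻¹ * f c)⁻¹ * ((f a)⁻¹ * f d) := by group
  rw [hcd]
  exact (h a b c).inv_right.mul_right (h a b d)

section Rack

variable {op : Q → Q → Q} {R : Q → Equiv.Perm Q}

theorem R_apply_eq_conj (hR : ∀ x y, R x y = op y x)
    (hrack : ∀ x a b, R x (op a b) = op (R x a) (R x b)) (u v : Q) :
    R (R v u) = R v * R u * (R v)⁻¹ := by
  rw [eq_mul_inv_iff_mul_eq]
  ext a
  simpa only [Equiv.Perm.mul_apply, hR] using (hrack v a u).symm

theorem op_op_op_eq (hR : ∀ x y, R x y = op y x)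
    (hrack : ∀ x a b, R x (op a b) = op (R x a) (R x b)) (x y u v : Q) :
    op (op x y) (op u v) = R v (R v (((R v)⁻¹ * R u * ((R v)⁻¹ * R y)) x)) := by
  rw [← hR, ← hR, ← hR, R_apply_eq_conj hR hrack]
  simp only [Equiv.Perm.mul_apply, Equiv.Perm.inv_def, Equiv.apply_symm_apply]

theorem medial_iff_commute_inv_mul (hR : ∀ x y, R x y = op y x)
    (hrack : ∀ x a b, R x (op a b) = op (R x a) (R x b)) :
    (∀ x y u v : Q, op (op x y) (op u v) = op (op x u) (op y v)) ↔
      ∀ v u y : Q, Commute ((R v)⁻¹ * R u) ((R v)⁻¹ * R y) := by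
  simp only [op_op_op_eq hR hrack, (R _).injective.eq_iff, Commute, SemiconjBy,
    Equiv.Perm.ext_iff, mul_assoc]
  exact ⟨fun h v u y x => h x y u v, fun h x y u v => h v u y x⟩

end Rack

/-- For a rack `Q`, `Dis(Q)` is abelian iff `Q` is medial. -/
theorem stmt6 (op : Q → Q → Q) (R : Q → Equiv.Perm Q)
    (hR : ∀ x y, R x y = op y x)
    (hrack : ∀ x a b, R x (op a b) = op (R x a) (R x b)) :
    (∀ g ∈ Dis R, ∀ h ∈ Dis R, g * h = h * g) ↔
      (∀ x y u v : Q, op (op x y) (op u v) = op (op x u) (op y v)) := by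
  rw [medial_iff_commute_inv_mul hR hrack]
  constructor
  · intro hcomm v u y
    exact hcomm _ (Subgroup.subset_closure ⟨v, u, rfl⟩) _ (Subgroup.subset_closure ⟨v, y, rfl⟩)
  · intro hcomm
    have : IsMulCommutative (Dis R) := Subgroup.isMulCommutative_closure <| by
      rintro _ ⟨a, b, rfl⟩ _ ⟨c, d, rfl⟩
      exact commute_inv_mul_inv_mul hcomm a b c d
    exact fun g hg h hh => setLike_mul_comm hg hh
end

section
/- Let (Q,·) be a connected quandle and e ∈ Q. Then the pair (RMlt(Q), R_e) is a quandle envelope: R_e lies in the center of the stabilizer of e in G = RMlt(Q), and the normal closure of R_e in G is all of G. -/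
variable {Q : Type*}

/-!
Every element of `RMlt(Q)` is a quandle automorphism, and for an automorphism `g` conjugation
transports right translations: `g R_x g⁻¹ = R_{g x}`. With `g e = e` this says that `g` commutes
with `R_e`; and since `RMlt(Q)` is transitive, every generator `R_x` is a conjugate `g R_e g⁻¹`
of `R_e`, so these conjugates generate all of `RMlt(Q)`.
-/

def opAutSubgroup (op : Q → Q → Q) : Subgroup (Equiv.Perm Q) where
  carrier := {g | ∀ a b, g (op a b) = op (g a) (g b)}
  one_mem' _ _ := rfl
  mul_mem' {g h} hg hh a b := show g (h _) = op (g (h a)) (g (h b)) by rw [hh a b, hg]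
  inv_mem' {g} hg a b := g.injective <| by
    rw [hg]
    simp only [Equiv.Perm.coe_inv, Equiv.apply_symm_apply]

section

variable {op : Q → Q → Q} {R : Q → Equiv.Perm Q}

theorem mul_R_mul_inv_of_mem_opAutSubgroup (hR : ∀ x y, R x y = op y x) {g : Equiv.Perm Q}
    (hg : g ∈ opAutSubgroup op) (x : Q) : g * R x * g⁻¹ = R (g x) := by
  ext a
  simp only [Equiv.Perm.coe_mul, Function.comp_apply, hR]
  rw [hg, Equiv.Perm.coe_inv, Equiv.apply_symm_apply]

theorem RMlt_le_opAutSubgroup (hrack : ∀ x a b, R x (op a b) = op (R x a) (R x b)) :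
    RMlt R ≤ opAutSubgroup op := by
  rw [RMlt, Subgroup.closure_le]
  rintro _ ⟨x, rfl⟩
  exact hrack x

theorem mul_R_mul_inv_of_mem_RMlt (hR : ∀ x y, R x y = op y x)
    (hrack : ∀ x a b, R x (op a b) = op (R x a) (R x b)) {g : Equiv.Perm Q} (hg : g ∈ RMlt R)
    (x : Q) : g * R x * g⁻¹ = R (g x) :=
  mul_R_mul_inv_of_mem_opAutSubgroup hR (RMlt_le_opAutSubgroup hrack hg) x

theorem commute_R_of_mem_RMlt_of_apply_eq (hR : ∀ x y, R x y = op y x)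
    (hrack : ∀ x a b, R x (op a b) = op (R x a) (R x b)) {g : Equiv.Perm Q} (hg : g ∈ RMlt R)
    {e : Q} (hge : g e = e) : Commute g (R e) := by
  have hconj := mul_R_mul_inv_of_mem_RMlt hR hrack hg e
  rwa [hge, mul_inv_eq_iff_eq_mul] at hconj

theorem closure_conjugates_R_eq_RMlt (hR : ∀ x y, R x y = op y x)
    (hrack : ∀ x a b, R x (op a b) = op (R x a) (R x b))
    (hconn : ∀ x y : Q, ∃ g ∈ RMlt R, g x = y) (e : Q) :
    Subgroup.closure {f : Equiv.Perm Q | ∃ g ∈ RMlt R, f = g * R e * g⁻¹} = RMlt R := by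
  have hR_mem : ∀ x, R x ∈ RMlt R := fun x => Subgroup.subset_closure ⟨x, rfl⟩
  apply le_antisymm
  · rw [Subgroup.closure_le]
    rintro _ ⟨g, hg, rfl⟩
    exact mul_mem (mul_mem hg (hR_mem e)) (inv_mem hg)
  · rw [RMlt, Subgroup.closure_le]
    rintro _ ⟨x, rfl⟩
    obtain ⟨g, hg, rfl⟩ := hconn e x
    exact Subgroup.subset_closure ⟨g, hg, (mul_R_mul_inv_of_mem_RMlt hR hrack hg e).symm⟩

end

/-- For a connected quandle `(Q,·)` and `e ∈ Q`, the pair `(RMlt(Q), R_e)` is a quandle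
envelope: `R_e` lies in the center of the stabilizer of `e` in `G = RMlt(Q)`, and the
normal closure of `R_e` in `G` is all of `G`. -/
theorem stmt11 (op : Q → Q → Q) (R : Q → Equiv.Perm Q)
    (hR : ∀ x y, R x y = op y x)
    (hidem : ∀ x, op x x = x)
    (hrack : ∀ x a b, R x (op a b) = op (R x a) (R x b))
    (hconn : ∀ x y : Q, ∃ g ∈ RMlt R, g x = y)
    (e : Q) :
    R e ∈ RMlt R ∧ (R e) e = e ∧
    (∀ g ∈ RMlt R, g e = e → g * R e = R e * g) ∧
    Subgroup.closure {f : Equiv.Perm Q | ∃ g ∈ RMlt R, f = g * R e * g⁻¹} = RMlt R :=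
  ⟨Subgroup.subset_closure ⟨e, rfl⟩, by rw [hR, hidem],
    fun _ hg hge => commute_R_of_mem_RMlt_of_apply_eq hR hrack hg hge,
    closure_conjugates_R_eq_RMlt hR hrack hconn e⟩
end

section
/- Let (G,ζ) be a quandle folder on a set Q with basepoint e (G transitive on Q, ζ ∈ Z(G_e)). If α, β ∈ G satisfy e^α = e^β, then ζ^α = ζ^β (conjugates of ζ agree). Consequently, the operation x ∘ y = x^{ζ^{ŷ}}, where ŷ ∈ G is any element with e^{ŷ} = y, is well defined, and (Q,∘) is a quandle. -/
/-!
If `e^α = e^β` then `β⁻¹α` fixes `e`, hence commutes with `ζ`, so `α` and `β` conjugate `ζ`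
to the same permutation. Thus `y ↦ ζ^ŷ` is a well-defined map `σ : Q → G`, and it is
`G`-equivariant: `σ (x^g) = (σ x)^g`. Idempotency is `ζ e = e`, and right self-distributivity
is equivariance applied to `g = σ y`.
-/

open Equiv

section

variable {Q : Type*} {e : Q} {G : Subgroup (Perm Q)} {ζ : Perm Q}

theorem conj_eq_of_apply_eq (hcen : ∀ g ∈ G, g e = e → g * ζ = ζ * g) {α β : Perm Q}
    (hα : α ∈ G) (hβ : β ∈ G) (h : α e = β e) : α * ζ * α⁻¹ = β * ζ * β⁻¹ := by
  have hcomm : Commute (β⁻¹ * α) ζ :=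
    hcen _ (mul_mem (inv_mem hβ) hα) (by simp [Perm.mul_apply, h])
  calc α * ζ * α⁻¹ = β * ((β⁻¹ * α) * ζ * (β⁻¹ * α)⁻¹) * β⁻¹ := by group
    _ = β * ζ * β⁻¹ := by rw [hcomm.mul_inv_cancel]

/-- `σ y` is the paper's `ζ^ŷ`; permutations act on the left here, so `ζ^g` is `g * ζ * g⁻¹`. -/
def IsConjFamily (G : Subgroup (Perm Q)) (e : Q) (ζ : Perm Q) (σ : Q → Perm Q) : Prop :=
  ∀ g ∈ G, σ (g e) = g * ζ * g⁻¹

theorem exists_isConjFamily (htrans : ∀ x : Q, ∃ g ∈ G, g e = x)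
    (hcen : ∀ g ∈ G, g e = e → g * ζ = ζ * g) : ∃ σ, IsConjFamily G e ζ σ := by
  choose g hgG hge using htrans
  refine ⟨fun y => g y * ζ * (g y)⁻¹, fun k hk => ?_⟩
  exact conj_eq_of_apply_eq hcen (hgG _) hk (hge _)

namespace IsConjFamily

variable {σ : Q → Perm Q}

theorem apply_self (hσ : IsConjFamily G e ζ σ) (htrans : ∀ x : Q, ∃ g ∈ G, g e = x)
    (hfix : ζ e = e) (x : Q) : σ x x = x := by
  obtain ⟨g, hg, rfl⟩ := htrans x
  simp [hσ g hg, Perm.mul_apply, hfix]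

theorem mem (hσ : IsConjFamily G e ζ σ) (htrans : ∀ x : Q, ∃ g ∈ G, g e = x)
    (hζ : ζ ∈ G) (y : Q) : σ y ∈ G := by
  obtain ⟨g, hg, rfl⟩ := htrans y
  rw [hσ g hg]
  exact mul_mem (mul_mem hg hζ) (inv_mem hg)

theorem map_apply (hσ : IsConjFamily G e ζ σ) (htrans : ∀ x : Q, ∃ g ∈ G, g e = x)
    {g : Perm Q} (hg : g ∈ G) (x : Q) : σ (g x) = g * σ x * g⁻¹ := by
  obtain ⟨k, hk, rfl⟩ := htrans x
  rw [hσ k hk, ← Perm.mul_apply, hσ (g * k) (mul_mem hg hk)]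
  group

end IsConjFamily

end

/-- Let `(G,ζ)` be a quandle folder on `(Q,e)`: `G ≤ Sym(Q)` transitive and
`ζ ∈ Z(G_e)`. If `α, β ∈ G` satisfy `e^α = e^β` then `ζ^α = ζ^β`; consequently the
operation `x ∘ y = x^{ζ^{ŷ}}` (where `e^{ŷ} = y`) is well defined and `(Q,∘)` is a
quandle. -/
theorem stmt12 {Q : Type*} (e : Q) (G : Subgroup (Equiv.Perm Q)) (ζ : Equiv.Perm Q)
    (hζ : ζ ∈ G) (hfix : ζ e = e)
    (htrans : ∀ x : Q, ∃ g ∈ G, g e = x)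
    (hcen : ∀ g ∈ G, g e = e → g * ζ = ζ * g) :
    (∀ α ∈ G, ∀ β ∈ G, α e = β e → α * ζ * α⁻¹ = β * ζ * β⁻¹) ∧
    ∃ op : Q → Q → Q,
      (∀ x y : Q, ∀ g ∈ G, g e = y → op x y = (g * ζ * g⁻¹) x) ∧
      (∀ x, op x x = x) ∧
      (∀ y a b, op (op a b) y = op (op a y) (op b y)) ∧
      (∀ y, Function.Bijective fun x => op x y) := by
  obtain ⟨σ, hσ⟩ := exists_isConjFamily htrans hcen
  refine ⟨fun α hα β hβ => conj_eq_of_apply_eq hcen hα hβ,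
    fun x y => σ y x, ?_, hσ.apply_self htrans hfix, ?_, fun y => (σ y).bijective⟩
  · rintro x _ g hg rfl
    exact congrArg (· x) (hσ g hg)
  · intro y a b
    simp [hσ.map_apply htrans (hσ.mem htrans hζ y) b, Perm.mul_apply]
end

section
/- Let (G,ζ) be a quandle envelope on (Q,e), i.e., G ≤ Sym(Q) transitive, ζ ∈ Z(G_e), and ⟨ζ^G⟩ = G. Then the quandle Q(G,ζ) with operation x ∘ y = x^{ζ^{ŷ}} (where e^{ŷ} = y) satisfies RMlt(Q(G,ζ)) = G, and in particular Q(G,ζ) is a connected quandle. -/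
/-!
The right translation by `y` is `g ζ g⁻¹` for any `g ∈ G` with `g e = y`, so by transitivity the
right translations are exactly the `G`-conjugates of `ζ`, which generate `G`. Connectedness is then
the transitivity of `G`.
-/

open Equiv

theorem Subgroup.exists_mem_apply_eq_of_forall_exists_apply_eq {Q : Type*}
    (G : Subgroup (Perm Q)) (e : Q) (htrans : ∀ x : Q, ∃ g ∈ G, g e = x) (x y : Q) :
    ∃ h ∈ G, h x = y := by
  obtain ⟨g, hg, rfl⟩ := htrans x
  obtain ⟨h, hh, rfl⟩ := htrans y
  exact ⟨h * g⁻¹, mul_mem hh (inv_mem hg), by simp⟩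

theorem setOf_rightTranslation_eq_setOf_conj {Q : Type*} (e : Q) (G : Subgroup (Perm Q))
    (ζ : Perm Q) (htrans : ∀ x : Q, ∃ g ∈ G, g e = x) (op : Q → Q → Q)
    (hop : ∀ x y : Q, ∀ g ∈ G, g e = y → op x y = (g * ζ * g⁻¹) x) :
    {f : Perm Q | ∃ y : Q, ∀ x, f x = op x y} = {f : Perm Q | ∃ g ∈ G, f = g * ζ * g⁻¹} := by
  ext f
  constructor
  · rintro ⟨y, hy⟩
    obtain ⟨g, hg, hgy⟩ := htrans y
    exact ⟨g, hg, Equiv.ext fun x => (hy x).trans (hop x y g hg hgy)⟩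
  · rintro ⟨g, hg, rfl⟩
    exact ⟨g e, fun x => (hop x (g e) g hg rfl).symm⟩

theorem stmt13_general {Q : Type*} (e : Q) (G : Subgroup (Equiv.Perm Q)) (ζ : Equiv.Perm Q)
    (htrans : ∀ x : Q, ∃ g ∈ G, g e = x)
    (hgen : Subgroup.closure {f : Equiv.Perm Q | ∃ g ∈ G, f = g * ζ * g⁻¹} = G)
    (op : Q → Q → Q)
    (hop : ∀ x y : Q, ∀ g ∈ G, g e = y → op x y = (g * ζ * g⁻¹) x) :
    Subgroup.closure {f : Equiv.Perm Q | ∃ y : Q, ∀ x, f x = op x y} = G ∧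
    (∀ x y : Q, ∃ h ∈ Subgroup.closure {f : Equiv.Perm Q | ∃ y : Q, ∀ x, f x = op x y},
      h x = y) := by
  have hRMlt : Subgroup.closure {f : Perm Q | ∃ y : Q, ∀ x, f x = op x y} = G := by
    rw [setOf_rightTranslation_eq_setOf_conj e G ζ htrans op hop, hgen]
  rw [hRMlt]
  exact ⟨rfl, G.exists_mem_apply_eq_of_forall_exists_apply_eq e htrans⟩

/-- Let `(G,ζ)` be a quandle envelope on `(Q,e)`. Then the quandle `Q(G,ζ)` with
operation `x ∘ y = x^{ζ^{ŷ}}` satisfies `RMlt(Q(G,ζ)) = G`; in particular it is a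
connected quandle. -/
theorem stmt13 {Q : Type*} (e : Q) (G : Subgroup (Equiv.Perm Q)) (ζ : Equiv.Perm Q)
    (hζ : ζ ∈ G) (hfix : ζ e = e)
    (htrans : ∀ x : Q, ∃ g ∈ G, g e = x)
    (hcen : ∀ g ∈ G, g e = e → g * ζ = ζ * g)
    (hgen : Subgroup.closure {f : Equiv.Perm Q | ∃ g ∈ G, f = g * ζ * g⁻¹} = G)
    (op : Q → Q → Q)
    (hop : ∀ x y : Q, ∀ g ∈ G, g e = y → op x y = (g * ζ * g⁻¹) x) :
    Subgroup.closure {f : Equiv.Perm Q | ∃ y : Q, ∀ x, f x = op x y} = G ∧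
    (∀ x y : Q, ∃ h ∈ Subgroup.closure {f : Equiv.Perm Q | ∃ y : Q, ∀ x, f x = op x y},
      h x = y) :=
  stmt13_general e G ζ htrans hgen op hop
end

section
/- The maps E : (Q,·) ↦ (RMlt(Q,·), R_e) and Q : (G,ζ) ↦ (Q,∘) with x ∘ y = x^{ζ^{ŷ}} are mutually inverse bijections between the set of connected quandle structures on a fixed pointed set (Q,e) and the set of quandle envelopes on (Q,e). -/
/-- A connected quandle structure on a set `Q`. -/
structure ConnQuandle (Q : Type*) where
  op : Q → Q → Q
  R : Q → Equiv.Perm Q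
  hR : ∀ x y, R x y = op y x
  idem : ∀ x, op x x = x
  auto : ∀ x a b, R x (op a b) = op (R x a) (R x b)
  conn : ∀ x y : Q, ∃ g ∈ Subgroup.closure (Set.range R), g x = y

/-- A quandle envelope on a pointed set `(Q,e)`: a transitive `G ≤ Sym(Q)` together
with `ζ ∈ Z(G_e)` whose normal closure in `G` is all of `G`. -/
structure QEnvelope (Q : Type*) (e : Q) where
  G : Subgroup (Equiv.Perm Q)
  ζ : Equiv.Perm Q
  mem : ζ ∈ G
  fix : ζ e = e
  trans : ∀ x : Q, ∃ g ∈ G, g e = x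
  central : ∀ g ∈ G, g e = e → g * ζ = ζ * g
  gen : Subgroup.closure {f : Equiv.Perm Q | ∃ g ∈ G, f = g * ζ * g⁻¹} = G

/-!
In a connected quandle the right multiplications are automorphisms, so every `g ∈ RMlt(Q)`
satisfies `g R_b g⁻¹ = R_{g b}`. Hence the stabiliser of `e` centralises `R_e`, the
conjugates of `R_e` are exactly the `R_y`, and they generate `RMlt(Q)`: this is an envelope.
Conversely, in an envelope `(G, ζ)` the conjugate `ζ^ĝ` depends only on `e^ĝ` because `G_e`
centralises `ζ`; the resulting map `y ↦ ζ^ŷ` is `G`-equivariant, which gives the quandle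
laws, and its image generates `G`, which gives connectedness. Each construction recovers the
data `(R_y)_y`, resp. `(G, ζ)`, that the other started from.
-/

namespace ConnQuandle

variable {Q : Type*}

theorem ext_of_R {C D : ConnQuandle Q} (h : C.R = D.R) : C = D := by
  have hop : C.op = D.op := by
    funext x y
    rw [← C.hR, ← D.hR, h]
  cases C; cases D; cases hop; cases h; rfl

theorem R_mul_R_mul_inv (C : ConnQuandle Q) (x b : Q) :
    C.R x * C.R b * (C.R x)⁻¹ = C.R (C.R x b) := by
  rw [mul_inv_eq_iff_eq_mul]
  ext a
  simp only [Equiv.Perm.mul_apply]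
  rw [C.hR b a, C.auto x a b, ← C.hR]

theorem conj_R_of_mem_closure (C : ConnQuandle Q) {g : Equiv.Perm Q}
    (hg : g ∈ Subgroup.closure (Set.range C.R)) (b : Q) :
    g * C.R b * g⁻¹ = C.R (g b) := by
  induction hg using Subgroup.closure_induction generalizing b with
  | mem f hf =>
    obtain ⟨x, rfl⟩ := hf
    exact C.R_mul_R_mul_inv x b
  | one => simp
  | mul g h _ _ ihg ihh =>
    calc g * h * C.R b * (g * h)⁻¹ = g * (h * C.R b * h⁻¹) * g⁻¹ := by group
      _ = C.R ((g * h) b) := by rw [ihh, ihg]; rfl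
  | inv g _ ihg =>
    have hconj := ihg (g⁻¹ b)
    rw [← Equiv.Perm.mul_apply, mul_inv_cancel, Equiv.Perm.one_apply] at hconj
    rw [← hconj]
    group

theorem conjugates_R_eq_range (C : ConnQuandle Q) (e : Q) :
    {f : Equiv.Perm Q | ∃ g ∈ Subgroup.closure (Set.range C.R), f = g * C.R e * g⁻¹} =
      Set.range C.R := by
  ext f
  constructor
  · rintro ⟨g, hg, rfl⟩
    exact ⟨g e, (C.conj_R_of_mem_closure hg e).symm⟩
  · rintro ⟨y, rfl⟩
    obtain ⟨g, hg, rfl⟩ := C.conn e y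
    exact ⟨g, hg, (C.conj_R_of_mem_closure hg e).symm⟩

def toQEnvelope (C : ConnQuandle Q) (e : Q) : QEnvelope Q e where
  G := Subgroup.closure (Set.range C.R)
  ζ := C.R e
  mem := Subgroup.subset_closure ⟨e, rfl⟩
  fix := by rw [C.hR, C.idem]
  trans x := C.conn e x
  central g hg hge := by
    rw [← mul_inv_eq_iff_eq_mul, C.conj_R_of_mem_closure hg e, hge]
  gen := by rw [C.conjugates_R_eq_range e]

end ConnQuandle

namespace QEnvelope

variable {Q : Type*} {e : Q}

theorem ext_of_G_of_ζ {A B : QEnvelope Q e} (hG : A.G = B.G) (hζ : A.ζ = B.ζ) : A = B := by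
  cases A; cases B; cases hG; cases hζ; rfl

theorem conj_ζ_eq_of_apply_eq (env : QEnvelope Q e) {g g' : Equiv.Perm Q} (hg : g ∈ env.G)
    (hg' : g' ∈ env.G) (h : g e = g' e) :
    g * env.ζ * g⁻¹ = g' * env.ζ * g'⁻¹ := by
  have hfix : (g⁻¹ * g') e = e := by
    rw [Equiv.Perm.mul_apply, ← h, ← Equiv.Perm.mul_apply, inv_mul_cancel, Equiv.Perm.one_apply]
  have hcomm := env.central _ (mul_mem (inv_mem hg) hg') hfix
  calc g * env.ζ * g⁻¹ = g * (env.ζ * (g⁻¹ * g')) * (g⁻¹ * g')⁻¹ * g⁻¹ := by group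
    _ = g' * env.ζ * g'⁻¹ := by rw [← hcomm]; group

/-- `ζ^ŷ` for one choice of `ŷ`; by `R_eq` every choice gives the same permutation. -/
noncomputable def R (env : QEnvelope Q e) (y : Q) : Equiv.Perm Q :=
  (env.trans y).choose * env.ζ * (env.trans y).choose⁻¹

theorem R_eq (env : QEnvelope Q e) {g : Equiv.Perm Q} {y : Q} (hg : g ∈ env.G) (hy : g e = y) :
    env.R y = g * env.ζ * g⁻¹ :=
  have hpick := (env.trans y).choose_spec
  env.conj_ζ_eq_of_apply_eq hpick.1 hg (hpick.2.trans hy.symm)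

theorem R_mem (env : QEnvelope Q e) (y : Q) : env.R y ∈ env.G :=
  have hpick := (env.trans y).choose_spec
  mul_mem (mul_mem hpick.1 env.mem) (inv_mem hpick.1)

theorem R_self (env : QEnvelope Q e) : env.R e = env.ζ := by
  rw [env.R_eq (one_mem _) (Equiv.Perm.one_apply e)]
  group

theorem R_apply_self (env : QEnvelope Q e) (x : Q) : env.R x x = x := by
  obtain ⟨g, hg, rfl⟩ := env.trans x
  rw [env.R_eq hg rfl]
  simp [env.fix]

theorem R_R (env : QEnvelope Q e) (x b : Q) :
    env.R (env.R x b) = env.R x * env.R b * (env.R x)⁻¹ := by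
  obtain ⟨g, hg, rfl⟩ := env.trans b
  rw [env.R_eq (mul_mem (env.R_mem x) hg) (Equiv.Perm.mul_apply _ _ e), env.R_eq hg rfl]
  group

theorem closure_range_R (env : QEnvelope Q e) : Subgroup.closure (Set.range env.R) = env.G := by
  convert env.gen using 2
  ext f
  constructor
  · rintro ⟨y, rfl⟩
    obtain ⟨g, hg, rfl⟩ := env.trans y
    exact ⟨g, hg, env.R_eq hg rfl⟩
  · rintro ⟨g, hg, rfl⟩
    exact ⟨g e, env.R_eq hg rfl⟩

noncomputable def toConnQuandle (env : QEnvelope Q e) : ConnQuandle Q where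
  op x y := env.R y x
  R := env.R
  hR _ _ := rfl
  idem := env.R_apply_self
  auto x a b := by
    rw [env.R_R x b]
    simp
  conn x y := by
    obtain ⟨gx, hgx, rfl⟩ := env.trans x
    obtain ⟨gy, hgy, rfl⟩ := env.trans y
    refine ⟨gy * gx⁻¹, ?_, by simp⟩
    rw [env.closure_range_R]
    exact mul_mem hgy (inv_mem hgx)

theorem toConnQuandle_toQEnvelope (env : QEnvelope Q e) :
    env.toConnQuandle.toQEnvelope e = env :=
  ext_of_G_of_ζ env.closure_range_R env.R_self

end QEnvelope

theorem ConnQuandle.toQEnvelope_toConnQuandle {Q : Type*} (C : ConnQuandle Q) (e : Q) :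
    (C.toQEnvelope e).toConnQuandle = C := by
  refine ConnQuandle.ext_of_R (funext fun y => ?_)
  obtain ⟨g, hg, rfl⟩ := C.conn e y
  exact ((C.toQEnvelope e).R_eq hg rfl).trans (C.conj_R_of_mem_closure hg e)

/-- The maps `E : (Q,·) ↦ (RMlt(Q,·), R_e)` and `Q : (G,ζ) ↦ (Q,∘)`,
`x ∘ y = x^{ζ^{ŷ}}`, are mutually inverse bijections between connected quandle
structures on `(Q,e)` and quandle envelopes on `(Q,e)`. -/
theorem stmt14 (Q : Type*) (e : Q) :
    ∃ (E : ConnQuandle Q → QEnvelope Q e) (F : QEnvelope Q e → ConnQuandle Q),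
      (∀ C : ConnQuandle Q,
        (E C).G = Subgroup.closure (Set.range C.R) ∧ (E C).ζ = C.R e) ∧
      (∀ env : QEnvelope Q e, ∀ x y : Q, ∀ g ∈ env.G, g e = y →
        (F env).op x y = (g * env.ζ * g⁻¹) x) ∧
      Function.LeftInverse F E ∧ Function.RightInverse F E :=
  ⟨(·.toQEnvelope e), QEnvelope.toConnQuandle, fun _ => ⟨rfl, rfl⟩,
    fun env x _ _ hg hy => congrArg (· x) (env.R_eq hg hy),
    fun C => C.toQEnvelope_toConnQuandle e, QEnvelope.toConnQuandle_toQEnvelope⟩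
end

section
/- Let A be an abelian group and f ∈ Aut(A). The group of displacements of the affine quandle Aff(A,f) = (A, x*y = f(x) + y − f(y)) is exactly the set of translations x ↦ x + c with c in the image of the endomorphism 1 − f; hence Dis(Aff(A,f)) is isomorphic to Im(1−f). Consequently, Aff(A,f) is connected if and only if 1 − f is surjective. -/
variable {Q : Type*}

/-!
Writing `R y = τ_{y - f y} ∘ f` with `τ_c = (· + c)`, every displacement
`(R a)⁻¹ R b = f⁻¹ τ_{(1-f)(b-a)} f = τ_{(1-f)(f⁻¹(b-a))}` is a translation by an element of
`Im(1-f)`, and conversely `τ_{z - f z} = (R 0)⁻¹ R (f z)`. So the generators of `Dis` are exactly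
the translations by `Im(1-f)`, which already form a group isomorphic to `Im(1-f)`, and this
group is transitive iff `Im(1-f)` is everything.
-/

open Function

section Translations

variable {A : Type*} [AddCommGroup A]

def translationHom (B : AddSubgroup A) : Multiplicative B →* Equiv.Perm A where
  toFun c := Equiv.addRight (c.toAdd : A)
  map_one' := by ext; simp
  map_mul' c d := by
    ext x
    simp only [toAdd_mul, AddSubgroup.coe_add, Equiv.coe_addRight, Equiv.Perm.coe_mul, comp_apply]
    abel

@[simp]
theorem translationHom_apply (B : AddSubgroup A) (c : Multiplicative B) (x : A) :
    translationHom B c x = x + c.toAdd :=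
  rfl

theorem translationHom_injective (B : AddSubgroup A) : Injective (translationHom B) :=
  fun c d h => by simpa using congr($h 0)

theorem coe_range_translationHom (B : AddSubgroup A) :
    ((translationHom B).range : Set (Equiv.Perm A)) = {g | ∃ c ∈ B, ∀ x, g x = x + c} := by
  ext g
  constructor
  · rintro ⟨c, rfl⟩
    exact ⟨c.toAdd, c.toAdd.2, fun x => rfl⟩
  · rintro ⟨c, hc, hg⟩
    exact ⟨Multiplicative.ofAdd ⟨c, hc⟩, Equiv.ext fun x => (hg x).symm⟩

theorem exists_mem_range_translationHom_apply_eq_iff (B : AddSubgroup A) :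
    (∀ x y : A, ∃ g ∈ (translationHom B).range, g x = y) ↔ B = ⊤ := by
  constructor
  · intro h
    refine eq_top_iff.2 fun c _ => ?_
    obtain ⟨g, ⟨d, rfl⟩, hd⟩ := h 0 c
    rw [← hd, translationHom_apply, zero_add]
    exact d.toAdd.2
  · rintro rfl x y
    exact ⟨_, ⟨Multiplicative.ofAdd ⟨y - x, trivial⟩, rfl⟩, add_sub_cancel x y⟩

end Translations

section AffineQuandle

variable {A : Type*} [AddCommGroup A] (f : A ≃+ A) {R : A → Equiv.Perm A}

theorem mem_range_id_sub_iff (c : A) :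
    c ∈ (AddMonoidHom.id A - f.toAddMonoidHom).range ↔ ∃ z, z - f z = c := by
  simp

theorem inv_mul_eq_addRight (hR : ∀ y x, R y x = f x + y - f y) (a b : A) :
    (R a)⁻¹ * R b = Equiv.addRight (f.symm (b - a) - (b - a)) := by
  ext x
  rw [Equiv.Perm.mul_apply, Equiv.Perm.inv_def, Equiv.symm_apply_eq, hR, hR, Equiv.coe_addRight]
  simp only [map_add, map_sub, f.apply_symm_apply]
  abel

theorem dis_eq_range_translationHom (hR : ∀ y x, R y x = f x + y - f y) :
    Dis R = (translationHom (AddMonoidHom.id A - f.toAddMonoidHom).range).range := by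
  suffices {g | ∃ a b, g = (R a)⁻¹ * R b} =
      Set.range (translationHom (AddMonoidHom.id A - f.toAddMonoidHom).range) by
    rw [Dis, this, ← MonoidHom.coe_range, Subgroup.closure_eq]
  ext g
  constructor
  · rintro ⟨a, b, rfl⟩
    refine ⟨Multiplicative.ofAdd ⟨f.symm (b - a) - (b - a),
      (mem_range_id_sub_iff f _).2 ⟨f.symm (b - a), by rw [f.apply_symm_apply]⟩⟩, ?_⟩
    rw [inv_mul_eq_addRight f hR]
    rfl
  · rintro ⟨⟨c, hc⟩, rfl⟩
    obtain ⟨z, rfl⟩ := (mem_range_id_sub_iff f c).1 hc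
    refine ⟨0, f z, ?_⟩
    rw [inv_mul_eq_addRight f hR, sub_zero, f.symm_apply_apply]
    rfl

end AffineQuandle

/-- The displacement group of the affine quandle `Aff(A,f)` consists exactly of the
translations by elements of `Im(1-f)`, is isomorphic to `Im(1-f)`, and `Aff(A,f)` is
connected iff `1 - f` is surjective. -/
theorem stmt16 {A : Type*} [AddCommGroup A] (f : A ≃+ A)
    (R : A → Equiv.Perm A)
    (hR : ∀ y x, R y x = f x + y - f y) :
    ((Dis R : Set (Equiv.Perm A)) =
      {g | ∃ c : A, (∃ z : A, z - f z = c) ∧ ∀ x, g x = x + c}) ∧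
    Nonempty (Additive (Dis R) ≃+ (AddMonoidHom.id A - f.toAddMonoidHom).range) ∧
    ((∀ x y : A, ∃ g ∈ Dis R, g x = y) ↔ Function.Surjective fun x : A => x - f x) := by
  have hDis := dis_eq_range_translationHom f hR
  refine ⟨?_, ?_, ?_⟩
  · simp_rw [hDis, coe_range_translationHom, mem_range_id_sub_iff]
  · exact ⟨MulEquiv.toAdditiveLeft ((MulEquiv.subgroupCongr hDis).trans
      (MonoidHom.ofInjective (translationHom_injective _)).symm)⟩
  · rw [hDis, exists_mem_range_translationHom_apply_eq_iff, AddMonoidHom.range_eq_top]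
    rfl
end
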